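/- Let D' be the 5×5 matrix with rows (0,0,0,-k1,p1), (0,0,0,k2,-p2), (0,0,0,-k3,p3), (-k1,k2,-k3,0,h), (p1,-p2,p3,-h,0) over ℚ[p1,p2,p3,k1,k2,k3,h]. Then det(D' - T·Id₅) = T⁵ + (h² - (p·p) - (k·k))T³ + ((p·p)(k·k) - (p·k)²)T. -/

import Mathlib

open Matrix Polynomial

noncomputable def p1 : MvPolynomial (Fin 7) ℚ := MvPolynomial.X 0
noncomputable def p2 : MvPolynomial (Fin 7) ℚ := MvPolynomial.X 1
noncomputable def p3 : MvPolynomial (Fin 7) ℚ := MvPolynomial.X 2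
noncomputable def k1 : MvPolynomial (Fin 7) ℚ := MvPolynomial.X 3
noncomputable def k2 : MvPolynomial (Fin 7) ℚ := MvPolynomial.X 4
noncomputable def k3 : MvPolynomial (Fin 7) ℚ := MvPolynomial.X 5
noncomputable def h : MvPolynomial (Fin 7) ℚ := MvPolynomial.X 6

noncomputable def Dp : Matrix (Fin 5) (Fin 5) (MvPolynomial (Fin 7) ℚ) :=
  !![0, 0, 0, -k1, p1;
    0, 0, 0, k2, -p2;
    0, 0, 0, -k3, p3;
    -k1, k2, -k3, 0, h;
    p1, -p2, p3, -h, 0]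


set_option maxHeartbeats 2000000 in
theorem det_fin_five' {R : Type*} [CommRing R] (M : Matrix (Fin 5) (Fin 5) R) :
    M.det = M 0 0*M 1 1*M 2 2*M 3 3*M 4 4 - M 0 0*M 1 1*M 2 2*M 3 4*M 4 3 - M 0 0*M 1 1*M 2 3*M 3 2*M 4 4 + M 0 0*M 1 1*M 2 3*M 3 4*M 4 2 + M 0 0*M 1 1*M 2 4*M 3 2*M 4 3 - M 0 0*M 1 1*M 2 4*M 3 3*M 4 2 - M 0 0*M 1 2*M 2 1*M 3 3*M 4 4 + M 0 0*M 1 2*M 2 1*M 3 4*M 4 3 + M 0 0*M 1 2*M 2 3*M 3 1*M 4 4 - M 0 0*M 1 2*M 2 3*M 3 4*M 4 1 - M 0 0*M 1 2*M 2 4*M 3 1*M 4 3 + M 0 0*M 1 2*M 2 4*M 3 3*M 4 1 + M 0 0*M 1 3*M 2 1*M 3 2*M 4 4 - M 0 0*M 1 3*M 2 1*M 3 4*M 4 2 - M 0 0*M 1 3*M 2 2*M 3 1*M 4 4 + M 0 0*M 1 3*M 2 2*M 3 4*M 4 1 + M 0 0*M 1 3*M 2 4*M 3 1*M 4 2 -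 M 0 0*M 1 3*M 2 4*M 3 2*M 4 1 - M 0 0*M 1 4*M 2 1*M 3 2*M 4 3 + M 0 0*M 1 4*M 2 1*M 3 3*M 4 2 + M 0 0*M 1 4*M 2 2*M 3 1*M 4 3 - M 0 0*M 1 4*M 2 2*M 3 3*M 4 1 - M 0 0*M 1 4*M 2 3*M 3 1*M 4 2 + M 0 0*M 1 4*M 2 3*M 3 2*M 4 1 - M 0 1*M 1 0*M 2 2*M 3 3*M 4 4 + M 0 1*M 1 0*M 2 2*M 3 4*M 4 3 + M 0 1*M 1 0*M 2 3*M 3 2*M 4 4 - M 0 1*M 1 0*M 2 3*M 3 4*M 4 2 - M 0 1*M 1 0*M 2 4*M 3 2*M 4 3 + M 0 1*M 1 0*M 2 4*M 3 3*M 4 2 + M 0 1*M 1 2*M 2 0*M 3 3*M 4 4 - M 0 1*M 1 2*M 2 0*M 3 4*M 4 3 - M 0 1*M 1 2*M 2 3*M 3 0*M 4 4 + M 0 1*M 1 2*M 2 3*M 3 4*M 4 0 + M 0 1*M 1 2*M 2 4*M 3 0*M 4 3 - M 0 1*M 1 2*M 2 4*M 3 3*M 4 0 - M 0 1*M 1 3*M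 2 0*M 3 2*M 4 4 + M 0 1*M 1 3*M 2 0*M 3 4*M 4 2 + M 0 1*M 1 3*M 2 2*M 3 0*M 4 4 - M 0 1*M 1 3*M 2 2*M 3 4*M 4 0 - M 0 1*M 1 3*M 2 4*M 3 0*M 4 2 + M 0 1*M 1 3*M 2 4*M 3 2*M 4 0 + M 0 1*M 1 4*M 2 0*M 3 2*M 4 3 - M 0 1*M 1 4*M 2 0*M 3 3*M 4 2 - M 0 1*M 1 4*M 2 2*M 3 0*M 4 3 + M 0 1*M 1 4*M 2 2*M 3 3*M 4 0 + M 0 1*M 1 4*M 2 3*M 3 0*M 4 2 - M 0 1*M 1 4*M 2 3*M 3 2*M 4 0 + M 0 2*M 1 0*M 2 1*M 3 3*M 4 4 - M 0 2*M 1 0*M 2 1*M 3 4*M 4 3 - M 0 2*M 1 0*M 2 3*M 3 1*M 4 4 + M 0 2*M 1 0*M 2 3*M 3 4*M 4 1 + M 0 2*M 1 0*M 2 4*M 3 1*M 4 3 - M 0 2*M 1 0*M 2 4*M 3 3*M 4 1 - M 0 2*M 1 1*M 2 0*M 3 3*M 4 4 + M 0 2*M 1 1*M 2 0*M 3 4*M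 4 3 + M 0 2*M 1 1*M 2 3*M 3 0*M 4 4 - M 0 2*M 1 1*M 2 3*M 3 4*M 4 0 - M 0 2*M 1 1*M 2 4*M 3 0*M 4 3 + M 0 2*M 1 1*M 2 4*M 3 3*M 4 0 + M 0 2*M 1 3*M 2 0*M 3 1*M 4 4 - M 0 2*M 1 3*M 2 0*M 3 4*M 4 1 - M 0 2*M 1 3*M 2 1*M 3 0*M 4 4 + M 0 2*M 1 3*M 2 1*M 3 4*M 4 0 + M 0 2*M 1 3*M 2 4*M 3 0*M 4 1 - M 0 2*M 1 3*M 2 4*M 3 1*M 4 0 - M 0 2*M 1 4*M 2 0*M 3 1*M 4 3 + M 0 2*M 1 4*M 2 0*M 3 3*M 4 1 + M 0 2*M 1 4*M 2 1*M 3 0*M 4 3 - M 0 2*M 1 4*M 2 1*M 3 3*M 4 0 - M 0 2*M 1 4*M 2 3*M 3 0*M 4 1 + M 0 2*M 1 4*M 2 3*M 3 1*M 4 0 - M 0 3*M 1 0*M 2 1*M 3 2*M 4 4 + M 0 3*M 1 0*M 2 1*M 3 4*M 4 2 + M 0 3*M 1 0*M 2 2*M 3 1*M 4 4 - M 0 3*M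 1 0*M 2 2*M 3 4*M 4 1 - M 0 3*M 1 0*M 2 4*M 3 1*M 4 2 + M 0 3*M 1 0*M 2 4*M 3 2*M 4 1 + M 0 3*M 1 1*M 2 0*M 3 2*M 4 4 - M 0 3*M 1 1*M 2 0*M 3 4*M 4 2 - M 0 3*M 1 1*M 2 2*M 3 0*M 4 4 + M 0 3*M 1 1*M 2 2*M 3 4*M 4 0 + M 0 3*M 1 1*M 2 4*M 3 0*M 4 2 - M 0 3*M 1 1*M 2 4*M 3 2*M 4 0 - M 0 3*M 1 2*M 2 0*M 3 1*M 4 4 + M 0 3*M 1 2*M 2 0*M 3 4*M 4 1 + M 0 3*M 1 2*M 2 1*M 3 0*M 4 4 - M 0 3*M 1 2*M 2 1*M 3 4*M 4 0 - M 0 3*M 1 2*M 2 4*M 3 0*M 4 1 + M 0 3*M 1 2*M 2 4*M 3 1*M 4 0 + M 0 3*M 1 4*M 2 0*M 3 1*M 4 2 - M 0 3*M 1 4*M 2 0*M 3 2*M 4 1 - M 0 3*M 1 4*M 2 1*M 3 0*M 4 2 + M 0 3*M 1 4*M 2 1*M 3 2*M 4 0 + M 0 3*M 1 4*M 2 2*M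 3 0*M 4 1 - M 0 3*M 1 4*M 2 2*M 3 1*M 4 0 + M 0 4*M 1 0*M 2 1*M 3 2*M 4 3 - M 0 4*M 1 0*M 2 1*M 3 3*M 4 2 - M 0 4*M 1 0*M 2 2*M 3 1*M 4 3 + M 0 4*M 1 0*M 2 2*M 3 3*M 4 1 + M 0 4*M 1 0*M 2 3*M 3 1*M 4 2 - M 0 4*M 1 0*M 2 3*M 3 2*M 4 1 - M 0 4*M 1 1*M 2 0*M 3 2*M 4 3 + M 0 4*M 1 1*M 2 0*M 3 3*M 4 2 + M 0 4*M 1 1*M 2 2*M 3 0*M 4 3 - M 0 4*M 1 1*M 2 2*M 3 3*M 4 0 - M 0 4*M 1 1*M 2 3*M 3 0*M 4 2 + M 0 4*M 1 1*M 2 3*M 3 2*M 4 0 + M 0 4*M 1 2*M 2 0*M 3 1*M 4 3 - M 0 4*M 1 2*M 2 0*M 3 3*M 4 1 - M 0 4*M 1 2*M 2 1*M 3 0*M 4 3 + M 0 4*M 1 2*M 2 1*M 3 3*M 4 0 + M 0 4*M 1 2*M 2 3*M 3 0*M 4 1 - M 0 4*M 1 2*M 2 3*M 3 1*M 4 0 -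 M 0 4*M 1 3*M 2 0*M 3 1*M 4 2 + M 0 4*M 1 3*M 2 0*M 3 2*M 4 1 + M 0 4*M 1 3*M 2 1*M 3 0*M 4 2 - M 0 4*M 1 3*M 2 1*M 3 2*M 4 0 - M 0 4*M 1 3*M 2 2*M 3 0*M 4 1 + M 0 4*M 1 3*M 2 2*M 3 1*M 4 0 := by
  simp [Matrix.det_succ_row_zero, Fin.sum_univ_succ, Fin.succAbove]
  ring

set_option maxHeartbeats 2000000 in
theorem aux {R : Type*} [CommRing R] (t a1 a2 a3 b1 b2 b3 c : R) :
    Matrix.det !![t, 0, 0, a1, -b1;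
       0, t, 0, -a2, b2;
       0, 0, t, a3, -b3;
       a1, -a2, a3, t, -c;
       -b1, b2, -b3, c, t] =
      t^5 + (c^2 - (b1^2 + b2^2 + b3^2) - (a1^2 + a2^2 + a3^2)) * t^3 +
        ((b1^2 + b2^2 + b3^2)*(a1^2 + a2^2 + a3^2) - (b1*a1 + b2*a2 + b3*a3)^2) * t := by
  rw [det_fin_five']
  simp only [Matrix.cons_val', Matrix.cons_val_zero, Matrix.cons_val_one, Matrix.head_cons,
    Matrix.empty_val', Matrix.cons_val_fin_one, Matrix.cons_val_succ, Matrix.head_fin_const,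
    Matrix.cons_val_two, Matrix.cons_val_three, Matrix.cons_val_four, Matrix.tail_cons,
    Matrix.of_apply]
  ring

set_option maxHeartbeats 2000000 in
theorem main :
    Matrix.det ((Polynomial.X : Polynomial (MvPolynomial (Fin 7) ℚ)) • (1 : Matrix (Fin 5) (Fin 5) (Polynomial (MvPolynomial (Fin 7) ℚ))) - (Dp.map Polynomial.C)) =
      Polynomial.X ^ 5 + Polynomial.C (h^2 - (p1^2 + p2^2 + p3^2) - (k1^2 + k2^2 + k3^2)) * Polynomial.X ^ 3 + Polynomial.C ((p1^2 + p2^2 + p3^2)*(k1^2 + k2^2 + k3^2) - (p1*k1 + p2*k2 + p3*k3)^2) * Polynomial.X := by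
  have hM : ((Polynomial.X : Polynomial (MvPolynomial (Fin 7) ℚ)) • (1 : Matrix (Fin 5) (Fin 5) (Polynomial (MvPolynomial (Fin 7) ℚ))) - (Dp.map Polynomial.C)) =
      !![Polynomial.X, 0, 0, Polynomial.C k1, -Polynomial.C p1;
         0, Polynomial.X, 0, -Polynomial.C k2, Polynomial.C p2;
         0, 0, Polynomial.X, Polynomial.C k3, -Polynomial.C p3;
         Polynomial.C k1, -Polynomial.C k2, Polynomial.C k3, Polynomial.X, -Polynomial.C h;
         -Polynomial.C p1, Polynomial.C p2, -Polynomial.C p3, Polynomial.C h, Polynomial.X] := by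
    ext i j
    fin_cases i <;> fin_cases j <;>
      norm_num [Dp, Matrix.one_apply, Fin.ext_iff]
  rw [hM, aux]
  simp only [← Polynomial.C_pow, ← Polynomial.C_add, ← Polynomial.C_sub, ← Polynomial.C_mul]
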